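/- Soundness and completeness of AX↓_det for the class M↓_det: an L-formula is a theorem of AX↓_det if and only if it is true in every causal simulation model whose machine is deterministic and halts on every input tape under every intervention. -/

import Mathlib

set_option maxHeartbeats 1000000

namespace CausalSim

/-! ### Propositional syntax -/

/-- Propositional formulas over atoms `X_i`. -/
inductive PropForm : Type
  | atom : ℕ → PropForm
  | neg : PropForm → PropForm
  | and : PropForm → PropForm → PropForm
  | or : PropForm → PropForm → PropForm
  deriving DecidableEq

def PropForm.imp (φ ψ : PropForm) : PropForm := .or (.neg φ) ψ

/-- A fixed propositional contradiction. -/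
def PropForm.bot : PropForm := .and (.atom 0) (.neg (.atom 0))

/-- Its negation, a fixed tautology. -/
def PropForm.top : PropForm := PropForm.neg PropForm.bot

def PropForm.eval (v : ℕ → Bool) : PropForm → Bool
  | .atom i => v i
  | .neg φ => !(φ.eval v)
  | .and φ ψ => φ.eval v && ψ.eval v
  | .or φ ψ => φ.eval v || ψ.eval v

/-- `L_int`: ordered conjunctions of literals over distinct atoms, represented by
the list of literals `(index, polarity)`, with strictly increasing indices.
The empty list represents the empty intervention `⊤`. -/
abbrev Lint : Type := {l : List (ℕ × Bool) // l.Chain' fun p q => p.1 < q.1}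

instance : DecidableEq Lint := fun a b =>
  decidable_of_iff (a.1 = b.1) Subtype.ext_iff.symm

def Lint.top : Lint := ⟨[], List.isChain_nil⟩

/-- The partial assignment (intervention) specified by `α ∈ L_int`. -/
def Lint.itv (α : Lint) : ℕ → Option Bool :=
  fun i => (α.1.find? fun p => p.1 == i).map Prod.snd

def PropForm.lit (p : ℕ × Bool) : PropForm :=
  if p.2 then .atom p.1 else .neg (.atom p.1)

/-- `α ∈ L_int` regarded as a propositional formula (conjunction of its literals;
`⊤` for the empty intervention). -/
def Lint.toProp (α : Lint) : PropForm :=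
  match α.1 with
  | [] => PropForm.top
  | p :: rest => rest.foldl (fun acc q => .and acc (.lit q)) (.lit p)

/-! ### The language `L` -/

/-- The causal simulation language `L`: propositional formulas over the atoms
`X ∪ L_cond`, where a conditional `[α]β` has antecedent `α ∈ L_int` and
consequent `β ∈ L_prop`. -/
inductive LForm : Type
  | atom : ℕ → LForm
  | cond : Lint → PropForm → LForm
  | neg : LForm → LForm
  | and : LForm → LForm → LForm
  | or : LForm → LForm → LForm

def LForm.imp (φ ψ : LForm) : LForm := .or (.neg φ) ψ

def LForm.iff (φ ψ : LForm) : LForm := .and (φ.imp ψ) (ψ.imp φ)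

/-- `⟨α⟩β`, an abbreviation for `¬[α]¬β`. -/
def LForm.dia (α : Lint) (β : PropForm) : LForm := .neg (.cond α (.neg β))

/-- The embedding of `L_prop` into `L`. -/
def PropForm.toL : PropForm → LForm
  | .atom i => .atom i
  | .neg φ => .neg φ.toL
  | .and φ ψ => .and φ.toL ψ.toL
  | .or φ ψ => .or φ.toL ψ.toL

/-- Evaluation of an `L`-formula treating the elements of `X ∪ L_cond` as
propositional atoms: `v` assigns values to the `X`-atoms and `w` to the
conditional atoms. -/
def LForm.evalA (v : ℕ → Bool) (w : Lint → PropForm → Bool) : LForm → Bool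
  | .atom i => v i
  | .cond α β => w α β
  | .neg φ => !(φ.evalA v w)
  | .and φ ψ => φ.evalA v w && ψ.evalA v w
  | .or φ ψ => φ.evalA v w || ψ.evalA v w

/-- Substitution instances of propositional tautologies over the atoms `X ∪ L_cond`. -/
def Tautology (φ : LForm) : Prop := ∀ v w, φ.evalA v w = true

/-! ### Turing machines over a Boolean variable tape, and interventions -/

/-- A transition rule `((q, read), (q', write, moveRight))`. -/
abbrev Rule : Type := (ℕ × Bool) × (ℕ × Bool × Bool)

/-- A (possibly non-deterministic) Turing machine, given by its finite list of
transition rules; the initial control state is `0`, and the machine halts in a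
configuration to which no rule applies. -/
abbrev Machine : Type := List Rule

/-- A configuration: control state, head position, and tape contents. -/
structure Cfg where
  q : ℕ
  pos : ℕ
  tape : ℕ → Bool

/-- The initial tape: the intervention `itv` first sets the intervened variables. -/
def initTape (itv : ℕ → Option Bool) (x : ℕ → Bool) : ℕ → Bool :=
  fun i => (itv i).getD (x i)

/-- Writing under an intervention: writes to intervened variables are ignored. -/
def writeTape (itv : ℕ → Option Bool) (t : ℕ → Bool) (pos : ℕ) (b : Bool) : ℕ → Bool :=
  if itv pos = none then Function.update t pos b else t

def movePos (p : ℕ) (right : Bool) : ℕ := if right then p + 1 else p - 1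

/-- One step of the intervened machine `I_itv(T)`. -/
def MStep (T : Machine) (itv : ℕ → Option Bool) (c c' : Cfg) : Prop :=
  ∃ r ∈ T, r.1 = (c.q, c.tape c.pos) ∧
    c' = ⟨r.2.1, movePos c.pos r.2.2.2, writeTape itv c.tape c.pos r.2.2.1⟩

/-- A halted configuration: no rule applies. -/
def Halted (T : Machine) (c : Cfg) : Prop := ∀ r ∈ T, r.1 ≠ (c.q, c.tape c.pos)

/-- The set of result tapes of halting executions of `I_itv(T)` on input `x`. -/
def Outputs (T : Machine) (itv : ℕ → Option Bool) (x : ℕ → Bool) : Set (ℕ → Bool) :=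
  {y | ∃ c : Cfg, Relation.ReflTransGen (MStep T itv) ⟨0, 0, initTape itv x⟩ c ∧
        Halted T c ∧ c.tape = y}

/-- Deterministic machines: at most one rule per (state, read symbol). -/
def Machine.Det (T : Machine) : Prop := ∀ r₁ ∈ T, ∀ r₂ ∈ T, r₁.1 = r₂.1 → r₁ = r₂

/-- State descriptions have finite support. -/
def FinSupp (x : ℕ → Bool) : Prop := {i | x i = true}.Finite

/-- Machines with at least one halting execution on every input tape under
every intervention. -/
def Machine.TotalHalting (T : Machine) : Prop :=
  ∀ (α : Lint) (x : ℕ → Bool), FinSupp x → (Outputs T α.itv x).Nonempty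

/-- Finite state machines: over all inputs and interventions, the machine reads and
writes only boundedly many tape variables. -/
def Machine.FiniteState (T : Machine) : Prop :=
  ∃ B : ℕ, ∀ (α : Lint) (x : ℕ → Bool), FinSupp x →
    ∀ c : Cfg, Relation.ReflTransGen (MStep T α.itv) ⟨0, 0, initTape α.itv x⟩ c → c.pos < B

/-! ### Causal simulation models and satisfaction -/

/-- A causal simulation model: a machine together with a state description with
finite support. -/
structure CSM where
  T : Machine
  x : ℕ → Bool
  fin : FinSupp x

/-- Satisfaction, generically in the map sending each intervention `α ∈ L_int`
to the set of output tapes of the corresponding halting executions. -/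
def SatGen (O : Lint → Set (ℕ → Bool)) (x : ℕ → Bool) : LForm → Prop
  | .atom i => x i = true
  | .cond α β => ∀ y ∈ O α, β.eval y = true
  | .neg φ => ¬ SatGen O x φ
  | .and φ ψ => SatGen O x φ ∧ SatGen O x ψ
  | .or φ ψ => SatGen O x φ ∨ SatGen O x ψ

/-- `(T, x) ⊨ φ`. -/
def CSM.Sat (M : CSM) (φ : LForm) : Prop :=
  SatGen (fun α => Outputs M.T α.itv M.x) M.x φ

/-- The class `M` of all causal simulation models. -/
def inM (_ : CSM) : Prop := True

/-- The class `M_det`. -/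
def inMdet (M : CSM) : Prop := M.T.Det

/-- The class `M↓`. -/
def inMhalt (M : CSM) : Prop := M.T.TotalHalting

/-- The class `M↓_det`. -/
def inMdethalt (M : CSM) : Prop := M.T.Det ∧ M.T.TotalHalting

/-! ### The axiomatic systems -/

/-- Derivability from: propositional tautologies (over atoms `X ∪ L_cond`),
the axioms `R` and `K`, extra axioms `extra`, modus ponens, and the rule `RW`. -/
inductive Deriv (extra : LForm → Prop) : LForm → Prop
  | taut {φ} : Tautology φ → Deriv extra φ
  | extra {φ} : extra φ → Deriv extra φ
  | axR (α : Lint) : Deriv extra (.cond α α.toProp)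
  | axK (α : Lint) (β γ : PropForm) :
      Deriv extra ((LForm.cond α (β.imp γ)).imp ((LForm.cond α β).imp (.cond α γ)))
  | mp {φ ψ} : Deriv extra (φ.imp ψ) → Deriv extra φ → Deriv extra ψ
  | rw (α : Lint) {β β' : PropForm} :
      Deriv extra (β.imp β').toL → Deriv extra ((LForm.cond α β).imp (.cond α β'))

/-- Instances of axiom `F : ⟨α⟩β → [α]β`. -/
def axF (φ : LForm) : Prop :=
  ∃ (α : Lint) (β : PropForm), φ = (LForm.dia α β).imp (.cond α β)

/-- Instances of axiom `D : [α]β → ⟨α⟩β`. -/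
def axD (φ : LForm) : Prop :=
  ∃ (α : Lint) (β : PropForm), φ = (LForm.cond α β).imp (LForm.dia α β)

def AX : LForm → Prop := Deriv fun _ => False
def AXdet : LForm → Prop := Deriv axF
def AXhalt : LForm → Prop := Deriv axD
def AXdethalt : LForm → Prop := Deriv fun φ => axF φ ∨ axD φ

end CausalSim
namespace CausalSim

/-! ### Normal form clauses and selection functions -/

def bigAndL : List LForm → LForm
  | [] => PropForm.top.toL
  | φ :: rest => rest.foldl .and φ

def bigOrL : List LForm → LForm
  | [] => PropForm.bot.toL
  | φ :: rest => rest.foldl .or φ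

def bigOrP : List PropForm → PropForm
  | [] => PropForm.bot
  | φ :: rest => rest.foldl .or φ

/-- The data of a conjunctive clause
`π ∧ ⋀_{i∈I}([α_i] ⋁_{j∈J_i} β_{i,j}) ∧ ⋀_{k∈K} ⟨α_k⟩ β_k`. -/
structure Clause where
  pi : PropForm
  boxes : List (Lint × List Lint)
  dias : List (Lint × Lint)

/-- The `α_i` (for distinct `i ∈ I`) are pairwise distinct. -/
def Clause.wf (δ : Clause) : Prop := (δ.boxes.map Prod.fst).Pairwise (· ≠ ·)

def Clause.toLForm (δ : Clause) : LForm :=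
  .and δ.pi.toL (.and
    (bigAndL (δ.boxes.map fun p => .cond p.1 (bigOrP (p.2.map Lint.toProp))))
    (bigAndL (δ.dias.map fun p => LForm.dia p.1 p.2.toProp)))

/-- `S_δ`: the antecedents occurring in the clause `δ`. -/
def Clause.ants (δ : Clause) : List Lint := δ.boxes.map Prod.fst ++ δ.dias.map Prod.fst

/-- A list of literals is propositionally consistent. -/
def LitsConsistent (l : List (ℕ × Bool)) : Prop :=
  ∀ i, ¬((i, true) ∈ l ∧ (i, false) ∈ l)

/-- `γ` is the `L_int`-equivalent of the conjunction of the literals `l`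
(reordering and deletion of repeated literals). -/
def Lint.IsEquivOf (γ : Lint) (l : List (ℕ × Bool)) : Prop := γ.1.toFinset = l.toFinset

/-- `f` is a selection function for the clause `δ`. -/
def IsSelection (δ : Clause) (f : Lint → List Lint) : Prop :=
  (∀ α ∈ δ.ants, α ∉ δ.dias.map Prod.fst → f α = []) ∧
  (∀ α ∈ δ.dias.map Prod.fst, ∃ sel : Lint × Lint → Lint,
    f α = (δ.dias.filter fun p => decide (p.1 = α)).map sel ∧
    ∀ p ∈ δ.dias, p.1 = α →
      (∀ J, (α, J) ∈ δ.boxes →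
        ∃ j ∈ J, LitsConsistent (α.1 ++ p.2.1 ++ j.1) ∧
          (sel p).IsEquivOf (α.1 ++ p.2.1 ++ j.1)) ∧
      (α ∉ δ.boxes.map Prod.fst →
        LitsConsistent (α.1 ++ p.2.1) ∧ (sel p).IsEquivOf (α.1 ++ p.2.1)))

/-! ### Sizes -/

def PropForm.size : PropForm → ℕ
  | .atom i => i + 1
  | .neg φ => φ.size + 1
  | .and φ ψ => φ.size + ψ.size + 1
  | .or φ ψ => φ.size + ψ.size + 1

def Lint.size (α : Lint) : ℕ := (α.1.map fun p => p.1 + 1).sum + 1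

/-- `|φ|`, the number of symbols of `φ` (an occurrence of the atom `X_i`
contributing `i + 1` symbols). -/
def LForm.size : LForm → ℕ
  | .atom i => i + 1
  | .cond α β => α.size + β.size + 1
  | .neg φ => φ.size + 1
  | .and φ ψ => φ.size + ψ.size + 1
  | .or φ ψ => φ.size + ψ.size + 1

def PropForm.maxAtom : PropForm → ℕ
  | .atom i => i
  | .neg φ => φ.maxAtom
  | .and φ ψ => max φ.maxAtom ψ.maxAtom
  | .or φ ψ => max φ.maxAtom ψ.maxAtom

def Lint.maxAtom (α : Lint) : ℕ := (α.1.map Prod.fst).foldr max 0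

/-- `N`: the largest index of an atom occurring in `φ`. -/
def LForm.maxAtom : LForm → ℕ
  | .atom i => i
  | .cond α β => max α.maxAtom β.maxAtom
  | .neg φ => φ.maxAtom
  | .and φ ψ => max φ.maxAtom ψ.maxAtom
  | .or φ ψ => max φ.maxAtom ψ.maxAtom

/-- `S_φ`: the antecedents of the conditionals occurring in `φ`. -/
def LForm.ants : LForm → List Lint
  | .atom _ => []
  | .cond α _ => [α]
  | .neg φ => φ.ants
  | .and φ ψ => φ.ants ++ ψ.ants
  | .or φ ψ => φ.ants ++ ψ.ants

/-! ### The programming language `PL` -/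

/-- Assignment statements `X_i := c`, `X_i := X_j`, `X_i := !X_j`. -/
inductive BAssign : Type
  | const (i : ℕ) (c : Bool)
  | copy (i j : ℕ)
  | negcopy (i j : ℕ)
  deriving DecidableEq

def BAssign.target : BAssign → ℕ
  | .const i _ => i
  | .copy i _ => i
  | .negcopy i _ => i

def BAssign.maxVar : BAssign → ℕ
  | .const i _ => i
  | .copy i j => max i j
  | .negcopy i j => max i j

/-- Tests `X_i = c`, `X_i = X_j`, `X_i != X_j`, and conjunctions thereof. -/
inductive BTest : Type
  | eqc (i : ℕ) (c : Bool)
  | eqv (i j : ℕ)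
  | nev (i j : ℕ)
  | and (t₁ t₂ : BTest)
  deriving DecidableEq

def BTest.eval (s : ℕ → Bool) : BTest → Bool
  | .eqc i c => s i == c
  | .eqv i j => s i == s j
  | .nev i j => !(s i == s j)
  | .and t₁ t₂ => t₁.eval s && t₂.eval s

def BTest.size : BTest → ℕ
  | .eqc _ _ => 1
  | .eqv _ _ => 1
  | .nev _ _ => 1
  | .and t₁ t₂ => t₁.size + t₂.size + 1

/-- Programs of `PL`: the empty program, assignments, sequencing,
if-then-else, nondeterministic choice, and the unconditional infinite loop. -/
inductive Prog : Type
  | empty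
  | assign (a : BAssign)
  | seq (p q : Prog)
  | ite (c : BTest) (p q : Prog)
  | choose (ps : List Prog)
  | loop

mutual
  /-- The length of a program. -/
  def Prog.size : Prog → ℕ
    | .empty => 1
    | .assign _ => 1
    | .seq p q => p.size + q.size + 1
    | .ite c p q => c.size + p.size + q.size + 1
    | .choose ps => Prog.sizeList ps + 1
    | .loop => 1
  def Prog.sizeList : List Prog → ℕ
    | [] => 0
    | p :: ps => p.size + Prog.sizeList ps
end

/-- The effect of an assignment under an intervention: writes to intervened
variables are ignored. -/
def applyAssign (itv : ℕ → Option Bool) (a : BAssign) (s : ℕ → Bool) : ℕ → Bool :=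
  let v : Bool := match a with
    | .const _ c => c
    | .copy _ j => s j
    | .negcopy _ j => !(s j)
  if itv a.target = none then Function.update s a.target v else s

/-- Big-step semantics of `PL` under an intervention. A `loop`-statement has no
halting execution, and a `choose`-statement executes one of its branches. -/
inductive BigStep (itv : ℕ → Option Bool) : Prog → (ℕ → Bool) → (ℕ → Bool) → Prop
  | empty (s) : BigStep itv .empty s s
  | assign (a s) : BigStep itv (.assign a) s (applyAssign itv a s)
  | seq {p q s t u} : BigStep itv p s t → BigStep itv q t u → BigStep itv (.seq p q) s u
  | iteT {c p q s t} : c.eval s = true → BigStep itv p s t → BigStep itv (.ite c p q) s t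
  | iteF {c p q s t} : c.eval s = false → BigStep itv q s t → BigStep itv (.ite c p q) s t
  | choose {ps p s t} : p ∈ ps → BigStep itv p s t → BigStep itv (.choose ps) s t

/-- The set of result tapes of halting executions of the intervened program. -/
def ProgOutputs (P : Prog) (itv : ℕ → Option Bool) (x : ℕ → Bool) : Set (ℕ → Bool) :=
  {y | BigStep itv P (initTape itv x) y}

/-- Satisfaction `(T_P, x) ⊨ φ` for the machine compiled from the program `P`
(whose executions are those of `P`). -/
def ProgSat (P : Prog) (x : ℕ → Bool) (φ : LForm) : Prop :=
  SatGen (fun α => ProgOutputs P α.itv x) x φ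

end CausalSim
namespace CausalSim

/-! ### The canonical program fragment `PL†_{φ,C}` -/

def seqList : List Prog → Prog
  | [] => .empty
  | p :: ps => .seq p (seqList ps)

/-- Listing 1: `IsIntervened(X_i)` (with offset parameter `N`): performs the
toggle check for `X_i`, records the result in `X_{i+N}`, uses `X_{i+2N}` as a
temporary variable, and leaves `X_i` unchanged. -/
def isIntervened (N i : ℕ) : Prog :=
  seqList [
    .assign (.copy (i + N) i),
    .assign (.negcopy i i),
    .assign (.copy (i + 2 * N) i),
    .ite (.eqv (i + 2 * N) (i + N))
      (.assign (.const (i + N) true)) (.assign (.const (i + N) false)),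
    .assign (.negcopy i i)]

/-- One copy of `IsIntervened(X_i)` for each `1 ≤ i ≤ N`. -/
def isIntervenedAll (N : ℕ) : Prog :=
  seqList ((List.range' 1 N).map (isIntervened N))

/-- Listing 2: `HoldsFromIntervention(α)`: the condition checking that exactly
the variables occurring in `α` are marked as intervened and carry the values
specified by `α`'s literals. -/
def holdsFromItv (N : ℕ) (α : Lint) : BTest :=
  ((List.range' 1 N).map fun i =>
    match α.itv i with
    | some b => BTest.and (.eqc i b) (.eqc (i + N) true)
    | none => BTest.eqc (i + N) false).foldr .and (.eqv 0 0)

/-- A sequence of assignment statements. -/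
def assignSeq (l : List BAssign) : Prog := seqList (l.map Prog.assign)

/-- An admissible assignment sequence: assignments only to (pairwise distinct)
variables `X_i` with `1 ≤ i ≤ N`, mentioning only variables of index `≤ N`. -/
def GoodAssigns (N : ℕ) (l : List BAssign) : Prop :=
  (l.map BAssign.target).Nodup ∧ ∀ a ∈ l, a.maxVar ≤ N ∧ 1 ≤ a.target

/-- The admissible bodies of the `if`-statements of a fragment program:
(a) a `choose`-statement with at most `C·|φ|` branches, each an admissible
assignment sequence; (b) a single admissible assignment sequence; or
(c) a single `loop`-statement — with (a) excluded for the deterministic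
dialects and (c) excluded for the halting dialects. -/
def IfBody (C N sz : ℕ) (allowChoose allowLoop : Bool) (p : Prog) : Prop :=
  (allowChoose = true ∧ ∃ branches : List (List BAssign),
      p = .choose (branches.map assignSeq) ∧ branches.length ≤ C * sz ∧
      ∀ l ∈ branches, GoodAssigns N l) ∨
  (∃ l : List BAssign, p = assignSeq l ∧ GoodAssigns N l) ∨
  (allowLoop = true ∧ p = .loop)

/-- Membership in the fragment `PL†_{φ,C}`: one copy of `IsIntervened(X_i)` for
each `1 ≤ i ≤ N`, followed by at most one `if`-statement with condition
`HoldsFromIntervention(α)` for each antecedent `α` occurring in `φ`, with an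
admissible body. -/
def InFrag (C : ℕ) (φ : LForm) (allowChoose allowLoop : Bool) (P : Prog) : Prop :=
  ∃ ifs : List (Lint × Prog),
    (ifs.map Prod.fst).Nodup ∧
    (∀ q ∈ ifs, q.1 ∈ φ.ants ∧ IfBody C φ.maxAtom φ.size allowChoose allowLoop q.2) ∧
    P = .seq (isIntervenedAll φ.maxAtom)
      (seqList (ifs.map fun q => Prog.ite (holdsFromItv φ.maxAtom q.1) q.2 .empty))

/-! ### Encodings into binary strings -/

def encNat (n : ℕ) : List Bool := List.replicate n true ++ [false]

def encListGen (enc : α → List Bool) (l : List α) : List Bool :=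
  encNat l.length ++ l.flatMap enc

def encLit (p : ℕ × Bool) : List Bool := encNat p.1 ++ [p.2]

def encLint (α : Lint) : List Bool := encListGen encLit α.1

def encProp : PropForm → List Bool
  | .atom i => encNat 0 ++ encNat i
  | .neg φ => encNat 1 ++ encProp φ
  | .and φ ψ => encNat 2 ++ encProp φ ++ encProp ψ
  | .or φ ψ => encNat 3 ++ encProp φ ++ encProp ψ

/-- A standard encoding of `L`-formulas as binary strings. -/
def encLForm : LForm → List Bool
  | .atom i => encNat 0 ++ encNat i
  | .cond α β => encNat 1 ++ encLint α ++ encProp β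
  | .neg φ => encNat 2 ++ encLForm φ
  | .and φ ψ => encNat 3 ++ encLForm φ ++ encLForm ψ
  | .or φ ψ => encNat 4 ++ encLForm φ ++ encLForm ψ

def encAssign : BAssign → List Bool
  | .const i c => encNat 0 ++ encNat i ++ [c]
  | .copy i j => encNat 1 ++ encNat i ++ encNat j
  | .negcopy i j => encNat 2 ++ encNat i ++ encNat j

def encTest : BTest → List Bool
  | .eqc i c => encNat 0 ++ encNat i ++ [c]
  | .eqv i j => encNat 1 ++ encNat i ++ encNat j
  | .nev i j => encNat 2 ++ encNat i ++ encNat j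
  | .and t₁ t₂ => encNat 3 ++ encTest t₁ ++ encTest t₂

mutual
  /-- A standard encoding of programs as binary strings. -/
  def encProg : Prog → List Bool
    | .empty => encNat 0
    | .assign a => encNat 1 ++ encAssign a
    | .seq p q => encNat 2 ++ encProg p ++ encProg q
    | .ite c p q => encNat 3 ++ encTest c ++ encProg p ++ encProg q
    | .choose ps => encNat 4 ++ encNat ps.length ++ encProgList ps
    | .loop => encNat 5
  def encProgList : List Prog → List Bool
    | [] => []
    | p :: ps => encProg p ++ encProgList ps
end

/-! ### Polynomial time, NP, and NP-completeness -/

/-- The identity finite encoding of binary strings. -/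
def listBoolFinEncoding : Computability.Encoding (List Bool) Bool where
  encode := id
  decode := fun l => some l
  decode_encode := fun _ => rfl

/-- `f` is computable in polynomial time (by a Turing machine). -/
def PolyTimeFun (f : List Bool → List Bool) : Prop :=
  Nonempty (Turing.TM2ComputableInPolyTime listBoolFinEncoding.encode listBoolFinEncoding.encode f)

/-- Polynomial-time many-one reducibility. -/
def PolyReducible (L₁ L₂ : List Bool → Prop) : Prop :=
  ∃ f : List Bool → List Bool, PolyTimeFun f ∧ ∀ s, L₁ s ↔ L₂ (f s)

/-- A self-delimiting pairing of binary strings. -/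
def encPairStr (a b : List Bool) : List Bool := encNat a.length ++ a ++ b

/-- The class NP, via polynomial-time verifiers of polynomial-length certificates. -/
def InNP (L : List Bool → Prop) : Prop :=
  ∃ (V : List Bool → Bool) (p : Polynomial ℕ),
    PolyTimeFun (fun s => [V s]) ∧
    ∀ s, L s ↔ ∃ w : List Bool, w.length ≤ p.eval s.length ∧ V (encPairStr s w) = true

/-- NP-completeness with respect to polynomial-time many-one reductions. -/
def NPComplete (L : List Bool → Prop) : Prop :=
  InNP L ∧ ∀ L' : List Bool → Prop, InNP L' → PolyReducible L' L

/-- The language Sim-Sat for a class of models: encodings of `L`-formulas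
satisfied by some model in the class. -/
def SimSatLang (cls : CSM → Prop) : List Bool → Prop :=
  fun s => ∃ φ : LForm, s = encLForm φ ∧ ∃ M : CSM, cls M ∧ M.Sat φ

/-! ### Miscellaneous helpers -/

/-- The state description with support the list `xs`. -/
def stateOf (xs : List ℕ) : ℕ → Bool := fun i => decide (i ∈ xs)

theorem finSupp_stateOf (xs : List ℕ) : FinSupp (stateOf xs) := by
  apply Set.Finite.subset (List.finite_toSet xs)
  intro i hi
  simpa [stateOf] using hi

/-- The model given by a machine and (the support of) a state description. -/
def csmOf (T : Machine) (xs : List ℕ) : CSM := ⟨T, stateOf xs, finSupp_stateOf xs⟩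

/-- The singleton intervention `X_n := 1`. -/
def lintSingle (n : ℕ) : Lint := ⟨[(n, true)], List.isChain_singleton _⟩

/-- The set `Ω` of the non-compactness proposition, for `f : ℕ → ℕ`. -/
def Omega (f : ℕ → ℕ) : Set LForm :=
  {ψ | ∃ n, ψ = LForm.neg (.atom n)} ∪
  {ψ | ∃ n, ψ = LForm.dia (lintSingle n) (.atom (f n))} ∪
  {ψ | ∃ n m, m ≠ n ∧ m ≠ f n ∧ ψ = LForm.cond (lintSingle n) (.neg (.atom m))}

end CausalSim

namespace CausalSim

/-!
Soundness: determinism makes the set of outputs of `I_α(T)` a subsingleton, which validates `F`,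
and halting makes it nonempty, which validates `D`; `R`, `K` and `RW` hold in every model.

Completeness: in `AX↓_det` the operator `[α]` commutes with `¬` (by `F` and `D`), and hence, using
`K` and `RW`, with `∧` and `∨`. So on the conditionals `[α]β` of `φ`, a valuation of `X ∪ L_cond`
satisfying these equivalences and `[α]α` is determined by the assignments `y α := (i ↦ [α]X_i)`,
and each `y α` satisfies `α`. This is the valuation of a model in `M↓_det`: its deterministic,
always halting machine finds out which of the cells `X₀, …, X_N` are intervened on by negating
each cell and reading it back (writes to intervened cells are ignored), and then writes `y α`.
Hence a formula valid on `M↓_det` is a tautological consequence of finitely many theorems of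
`AX↓_det`.
-/

theorem PropForm.eval_congr {β : PropForm} {v v' : ℕ → Bool}
    (h : ∀ i ≤ β.maxAtom, v i = v' i) : β.eval v = β.eval v' := by
  induction β with
  | atom i => exact h i le_rfl
  | neg β ih => simp only [PropForm.eval, ih h]
  | and β γ ihβ ihγ | or β γ ihβ ihγ =>
    simp only [PropForm.eval, PropForm.maxAtom] at h ⊢
    rw [ihβ fun i hi => h i (le_max_of_le_left hi), ihγ fun i hi => h i (le_max_of_le_right hi)]

theorem PropForm.evalA_toL (β : PropForm) (v : ℕ → Bool) (w : Lint → PropForm → Bool) :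
    β.toL.evalA v w = β.eval v := by
  induction β <;> simp_all [PropForm.toL, LForm.evalA, PropForm.eval]

theorem PropForm.eval_imp (β γ : PropForm) (v : ℕ → Bool) :
    (β.imp γ).eval v = true ↔ (β.eval v = true → γ.eval v = true) := by
  cases hβ : β.eval v <;> cases hγ : γ.eval v <;> simp [PropForm.imp, PropForm.eval, hβ, hγ]

theorem Lint.toProp_eval_iff (α : Lint) (v : ℕ → Bool) :
    α.toProp.eval v = true ↔ ∀ q ∈ α.1, v q.1 = q.2 := by
  have lit_eval (q : ℕ × Bool) : (PropForm.lit q).eval v = (v q.1 == q.2) := by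
    rcases q with ⟨i, _ | _⟩ <;> cases h : v i <;> simp [PropForm.lit, PropForm.eval, *]
  have foldl_eval (l : List (ℕ × Bool)) (acc : PropForm) :
      (l.foldl (fun acc q => .and acc (.lit q)) acc).eval v =
        (acc.eval v && l.all fun q => (PropForm.lit q).eval v) := by
    induction l generalizing acc <;> simp [PropForm.eval, Bool.and_assoc, *]
  rcases α with ⟨_ | ⟨q, l⟩, hl⟩
  · cases h : v 0 <;> simp [Lint.toProp, PropForm.top, PropForm.bot, PropForm.eval, h]
  · simp [Lint.toProp, foldl_eval, lit_eval]

def truncate (v : ℕ → Bool) (n : ℕ) : ℕ → Bool := fun i => v i && decide (i ≤ n)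

theorem finSupp_truncate (v : ℕ → Bool) (n : ℕ) : FinSupp (truncate v n) :=
  (Set.finite_le_nat n).subset fun i hi => by simp_all [truncate]

theorem truncate_of_le {v : ℕ → Bool} {n i : ℕ} (h : i ≤ n) : truncate v n i = v i := by
  simp [truncate, h]

theorem Lint.pairwise (α : Lint) : α.1.Pairwise fun p q => p.1 < q.1 :=
  List.isChain_iff_pairwise.mp α.2

theorem Lint.nodup_fst (α : Lint) : (α.1.map Prod.fst).Nodup :=
  (List.pairwise_map.mpr α.pairwise).imp ne_of_lt

theorem Lint.eq_of_fst_eq {α : Lint} {p q : ℕ × Bool} (hp : p ∈ α.1) (hq : q ∈ α.1)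
    (h : p.1 = q.1) : p = q :=
  List.inj_on_of_nodup_map α.nodup_fst hp hq h

theorem Lint.itv_eq_some_iff {α : Lint} {i : ℕ} {b : Bool} :
    α.itv i = some b ↔ (i, b) ∈ α.1 := by
  constructor
  · intro h
    obtain ⟨p, hp, rfl⟩ := Option.map_eq_some_iff.mp h
    obtain rfl : p.1 = i := by simpa using List.find?_some hp
    exact List.mem_of_find?_eq_some hp
  · intro h
    obtain ⟨p, hp⟩ := Option.isSome_iff_exists.mp
      (List.find?_isSome.mpr ⟨(i, b), h, by simp⟩ : (α.1.find? fun p => p.1 == i).isSome)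
    have hpi : p.1 = i := by simpa using List.find?_some hp
    simp [Lint.itv, hp, Lint.eq_of_fst_eq (List.mem_of_find?_eq_some hp) h hpi]

theorem Lint.fst_le_maxAtom {α : Lint} {q : ℕ × Bool} (h : q ∈ α.1) : q.1 ≤ α.maxAtom :=
  List.le_max_of_le (List.mem_map_of_mem h) le_rfl

theorem Lint.itv_eq_none_of_maxAtom_lt {α : Lint} {i : ℕ} (h : α.maxAtom < i) :
    α.itv i = none := by
  cases hi : α.itv i with
  | none => rfl
  | some b => exact absurd (Lint.fst_le_maxAtom (Lint.itv_eq_some_iff.mp hi)) (by simpa using h)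

theorem Lint.itv_injective : Function.Injective Lint.itv := by
  intro α α' h
  have hmem : ∀ q, q ∈ α.1 ↔ q ∈ α'.1 := fun q => by
    rw [← Lint.itv_eq_some_iff, ← Lint.itv_eq_some_iff, h]
  exact Subtype.ext <| List.Perm.eq_of_pairwise (fun _ _ _ _ h₁ h₂ => absurd h₁ h₂.not_gt)
    α.pairwise α'.pairwise
    ((List.perm_ext_iff_of_nodup α.nodup_fst.of_map α'.nodup_fst.of_map).mpr hmem)

theorem Lint.eq_of_itv_eq {α α' : Lint} {N : ℕ} (hα : α.maxAtom ≤ N) (hα' : α'.maxAtom ≤ N)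
    (h : ∀ i ≤ N, α.itv i = α'.itv i) : α = α' := by
  refine Lint.itv_injective (funext fun i => ?_)
  by_cases hi : i ≤ N
  · exact h i hi
  · rw [Lint.itv_eq_none_of_maxAtom_lt (by omega), Lint.itv_eq_none_of_maxAtom_lt (by omega)]

def LForm.conds : LForm → List (Lint × PropForm)
  | .atom _ => []
  | .cond α β => [(α, β)]
  | .neg φ => φ.conds
  | .and φ ψ | .or φ ψ => φ.conds ++ ψ.conds

theorem LForm.maxAtom_le_of_mem_conds {φ : LForm} {q : Lint × PropForm} (h : q ∈ φ.conds) :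
    q.1.maxAtom ≤ φ.maxAtom ∧ q.2.maxAtom ≤ φ.maxAtom := by
  induction φ with
  | atom => simp [LForm.conds] at h
  | cond α β => simp_all [LForm.conds, LForm.maxAtom]
  | neg φ ih => exact ih h
  | and φ ψ ihφ ihψ | or φ ψ ihφ ihψ =>
    simp only [LForm.conds, List.mem_append, LForm.maxAtom, le_max_iff] at h ⊢
    rcases h with h | h
    · exact ⟨.inl (ihφ h).1, .inl (ihφ h).2⟩
    · exact ⟨.inr (ihψ h).1, .inr (ihψ h).2⟩

theorem LForm.evalA_congr {φ : LForm} {v v' : ℕ → Bool} {w w' : Lint → PropForm → Bool}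
    (hv : ∀ i ≤ φ.maxAtom, v i = v' i) (hw : ∀ q ∈ φ.conds, w q.1 q.2 = w' q.1 q.2) :
    φ.evalA v w = φ.evalA v' w' := by
  induction φ with
  | atom i => exact hv i le_rfl
  | cond α β => exact hw (α, β) (List.mem_singleton_self _)
  | neg φ ih => simp only [LForm.evalA, ih hv hw]
  | and φ ψ ihφ ihψ | or φ ψ ihφ ihψ =>
    simp only [LForm.evalA, LForm.maxAtom, LForm.conds, List.mem_append] at hv hw ⊢
    rw [ihφ (fun i hi => hv i (le_max_of_le_left hi)) (fun q hq => hw q (.inl hq)),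
      ihψ (fun i hi => hv i (le_max_of_le_right hi)) (fun q hq => hw q (.inr hq))]

theorem LForm.evalA_iff_eq {φ ψ : LForm} {v : ℕ → Bool} {w : Lint → PropForm → Bool} :
    (φ.iff ψ).evalA v w = true ↔ φ.evalA v w = ψ.evalA v w := by
  simp only [LForm.iff, LForm.imp, LForm.evalA]
  cases φ.evalA v w <;> cases ψ.evalA v w <;> decide

section SatGen

variable (O : Lint → Set (ℕ → Bool)) (x : ℕ → Bool)

open Classical in
theorem satGen_iff_evalA (φ : LForm) :
    SatGen O x φ ↔ φ.evalA x (fun α β => decide (∀ y ∈ O α, β.eval y = true)) = true := by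
  induction φ <;> simp_all [SatGen, LForm.evalA]

theorem satGen_imp (φ ψ : LForm) : SatGen O x (φ.imp ψ) ↔ (SatGen O x φ → SatGen O x ψ) := by
  simp only [LForm.imp, SatGen, imp_iff_not_or]

theorem satGen_dia (α : Lint) (β : PropForm) :
    SatGen O x (LForm.dia α β) ↔ ∃ y ∈ O α, β.eval y = true := by
  simp [LForm.dia, SatGen, PropForm.eval]

theorem satGen_toL (β : PropForm) : SatGen O x β.toL ↔ β.eval x = true := by
  induction β <;> simp_all [PropForm.toL, SatGen, PropForm.eval]

end SatGen

section Machines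

variable {T : Machine} {itv : ℕ → Option Bool}

theorem MStep.not_halted {c c' : Cfg} (h : MStep T itv c c') : ¬Halted T c := by
  obtain ⟨r, hr, he, _⟩ := h
  exact fun hc => hc r hr he

theorem MStep.eq_of_det (hT : T.Det) {c c₁ c₂ : Cfg} (h₁ : MStep T itv c c₁)
    (h₂ : MStep T itv c c₂) : c₁ = c₂ := by
  obtain ⟨r₁, hr₁, he₁, rfl⟩ := h₁
  obtain ⟨r₂, hr₂, he₂, rfl⟩ := h₂
  rw [hT r₁ hr₁ r₂ hr₂ (he₁.trans he₂.symm)]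

theorem halted_eq_of_det (hT : T.Det) {c d₁ d₂ : Cfg}
    (h₁ : Relation.ReflTransGen (MStep T itv) c d₁) (hd₁ : Halted T d₁)
    (h₂ : Relation.ReflTransGen (MStep T itv) c d₂) (hd₂ : Halted T d₂) : d₁ = d₂ := by
  induction h₁ using Relation.ReflTransGen.head_induction_on with
  | refl =>
    rcases h₂.cases_head with rfl | ⟨_, hstep, _⟩
    · rfl
    · exact absurd hd₁ hstep.not_halted
  | head hstep _ ih =>
    rcases h₂.cases_head with rfl | ⟨_, hstep', h₂⟩
    · exact absurd hd₂ hstep.not_halted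
    · exact ih (hstep'.eq_of_det hT hstep ▸ h₂)

theorem outputs_subsingleton_of_det (hT : T.Det) (x : ℕ → Bool) :
    (Outputs T itv x).Subsingleton := by
  rintro _ ⟨d₁, h₁, hd₁, rfl⟩ _ ⟨d₂, h₂, hd₂, rfl⟩
  rw [halted_eq_of_det hT h₁ hd₁ h₂ hd₂]

theorem MStep.tape_eq_of_intervened {c c' : Cfg} (h : MStep T itv c c') {i : ℕ}
    (hi : itv i ≠ none) : c'.tape i = c.tape i := by
  obtain ⟨r, -, -, rfl⟩ := h
  unfold writeTape
  split_ifs with hpos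
  · exact Function.update_of_ne (by rintro rfl; exact hi hpos) _ _
  · rfl

theorem eq_of_mem_outputs_of_itv_eq_some {x y : ℕ → Bool} (hy : y ∈ Outputs T itv x)
    {i : ℕ} {b : Bool} (hi : itv i = some b) : y i = b := by
  obtain ⟨c, hc, -, rfl⟩ := hy
  have : c.tape i = initTape itv x i := by
    induction hc with
    | refl => rfl
    | tail _ hstep ih => rw [hstep.tape_eq_of_intervened (by simp [hi]), ih]
  simp [this, initTape, hi]

theorem Machine.det_nil : Machine.Det [] := by
  simp [Machine.Det]

theorem Machine.totalHalting_nil : Machine.TotalHalting [] :=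
  fun α x _ => ⟨_, ⟨0, 0, initTape α.itv x⟩, .refl, by simp [Halted], rfl⟩

end Machines

section Soundness

variable {extra : LForm → Prop} {C : CSM → Prop}

theorem Deriv.sound (hC : ∀ x, FinSupp x → ∃ M, C M ∧ M.x = x)
    (hextra : ∀ φ, extra φ → ∀ M, C M → M.Sat φ) {φ : LForm} (h : Deriv extra φ) :
    ∀ M, C M → M.Sat φ := by
  induction h with
  | taut ht =>
    intro M _
    classical
    exact (satGen_iff_evalA _ _ _).mpr (ht _ _)
  | extra he => exact hextra _ he
  | axR α =>
    intro M _ y hy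
    exact (Lint.toProp_eval_iff α y).mpr fun q hq =>
      eq_of_mem_outputs_of_itv_eq_some hy (Lint.itv_eq_some_iff.mpr hq)
  | axK α β γ =>
    intro M _
    simp only [CSM.Sat, satGen_imp, SatGen, PropForm.eval_imp]
    exact fun hβγ hβ y hy => hβγ y hy (hβ y hy)
  | mp _ _ ihimp ih => exact fun M hM => (satGen_imp _ _ _ _).mp (ihimp M hM) (ih M hM)
  | @rw α β β' _ ih =>
    have hvalid (v : ℕ → Bool) : (β.imp β').eval v = true := by
      obtain ⟨M, hM, hx⟩ := hC _ (finSupp_truncate v (β.imp β').maxAtom)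
      have := (satGen_toL _ _ _).mp (ih M hM)
      rwa [hx, PropForm.eval_congr fun i hi => truncate_of_le hi] at this
    intro M _
    simp only [CSM.Sat, satGen_imp, SatGen]
    exact fun hβ y hy => (PropForm.eval_imp _ _ _).mp (hvalid y) (hβ y hy)

theorem CSM.sat_axF_of_det {M : CSM} (hM : M.T.Det) {φ : LForm} (hφ : axF φ) : M.Sat φ := by
  obtain ⟨α, β, rfl⟩ := hφ
  simp only [CSM.Sat, satGen_imp, satGen_dia, SatGen]
  rintro ⟨y, hy, hβ⟩ y' hy'
  rwa [outputs_subsingleton_of_det hM M.x hy' hy]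

theorem CSM.sat_axD_of_totalHalting {M : CSM} (hM : M.T.TotalHalting) {φ : LForm}
    (hφ : axD φ) : M.Sat φ := by
  obtain ⟨α, β, rfl⟩ := hφ
  simp only [CSM.Sat, satGen_imp, satGen_dia, SatGen]
  obtain ⟨y, hy⟩ := hM α M.x M.fin
  exact fun hβ => ⟨y, hy, hβ y hy⟩

theorem AXdethalt_sound {φ : LForm} (h : AXdethalt φ) : ∀ M, inMdethalt M → M.Sat φ :=
  Deriv.sound (fun x hx => ⟨⟨[], x, hx⟩, ⟨Machine.det_nil, Machine.totalHalting_nil⟩, rfl⟩)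
    (fun _ hφ _ hM => hφ.elim (CSM.sat_axF_of_det hM.1) (CSM.sat_axD_of_totalHalting hM.2)) h

end Soundness

section Derivations

variable {extra : LForm → Prop}

theorem Deriv.of_hyps {hyps : List LForm} {φ : LForm} (hd : hyps.Forall (Deriv extra))
    (hφ : ∀ v w, (∀ ψ ∈ hyps, ψ.evalA v w = true) → φ.evalA v w = true) : Deriv extra φ := by
  rw [List.forall_iff_forall_mem] at hd
  induction hyps generalizing φ with
  | nil => exact .taut fun v w => hφ v w (by simp)
  | cons ψ hyps ih =>
    simp only [List.forall_mem_cons] at hd hφ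
    refine .mp (ih hd.2 fun v w h => ?_) hd.1
    cases hψ : ψ.evalA v w <;> simp_all [LForm.imp, LForm.evalA]

theorem Deriv.rw_of_imp (α : Lint) {β β' : PropForm}
    (h : ∀ v, β.eval v = true → β'.eval v = true) :
    Deriv extra ((LForm.cond α β).imp (.cond α β')) :=
  .rw α (.taut fun v _ => by rw [PropForm.evalA_toL, PropForm.eval_imp]; exact h v)

theorem Deriv.cond_and_intro (α : Lint) (β γ : PropForm) :
    Deriv extra ((LForm.cond α β).imp ((LForm.cond α γ).imp (.cond α (β.and γ)))) := by
  apply Deriv.of_hyps (hyps := [(LForm.cond α β).imp (.cond α (γ.imp (β.and γ))),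
    (LForm.cond α (γ.imp (β.and γ))).imp ((LForm.cond α γ).imp (.cond α (β.and γ)))])
  · refine ⟨.rw_of_imp α fun v => ?_, .axK α γ (β.and γ)⟩
    simp_all [PropForm.imp, PropForm.eval]
  · intro v w
    simp [LForm.imp, LForm.evalA, ← Bool.not_eq_true]
    tauto

theorem AXdethalt.cond_neg_iff (α : Lint) (β : PropForm) :
    AXdethalt ((LForm.cond α β.neg).iff (.neg (.cond α β))) := by
  apply Deriv.of_hyps (hyps := [(LForm.cond α β).imp (LForm.dia α β),
    (LForm.dia α β).imp (.cond α β)])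
  · exact ⟨.extra (.inr ⟨α, β, rfl⟩), .extra (.inl ⟨α, β, rfl⟩)⟩
  · intro v w
    simp [LForm.imp, LForm.iff, LForm.dia, LForm.evalA, ← Bool.not_eq_true]
    tauto

theorem Deriv.cond_and_iff (α : Lint) (β γ : PropForm) :
    Deriv extra ((LForm.cond α (β.and γ)).iff (.and (.cond α β) (.cond α γ))) := by
  apply Deriv.of_hyps (hyps := [(LForm.cond α (β.and γ)).imp (.cond α β),
    (LForm.cond α (β.and γ)).imp (.cond α γ),
    (LForm.cond α β).imp ((LForm.cond α γ).imp (.cond α (β.and γ)))])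
  · refine ⟨.rw_of_imp α fun v => ?_, .rw_of_imp α fun v => ?_, .cond_and_intro α β γ⟩ <;>
      simp_all [PropForm.eval]
  · intro v w
    simp [LForm.imp, LForm.iff, LForm.evalA, ← Bool.not_eq_true]
    tauto

theorem AXdethalt.cond_or_iff (α : Lint) (β γ : PropForm) :
    AXdethalt ((LForm.cond α (β.or γ)).iff (.or (.cond α β) (.cond α γ))) := by
  apply Deriv.of_hyps (hyps := [(LForm.cond α β).imp (.cond α (β.or γ)),
    (LForm.cond α γ).imp (.cond α (β.or γ)),
    (LForm.cond α γ.neg).iff (.neg (.cond α γ)),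
    (LForm.cond α (β.or γ)).imp ((LForm.cond α γ.neg).imp (.cond α ((β.or γ).and γ.neg))),
    (LForm.cond α ((β.or γ).and γ.neg)).imp (.cond α β)])
  · refine ⟨.rw_of_imp α fun v => ?_, .rw_of_imp α fun v => ?_, cond_neg_iff α γ,
      .cond_and_intro α _ _, .rw_of_imp α fun v => ?_⟩ <;>
      simp [PropForm.eval, ← Bool.not_eq_true] <;> tauto
  · intro v w
    simp [LForm.imp, LForm.iff, LForm.evalA, ← Bool.not_eq_true]
    tauto

end Derivations

/-- The equivalences reducing `[α]β` to conditionals on the atoms of `β`. -/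
def decompHyps (α : Lint) : PropForm → List LForm
  | .atom _ => []
  | .neg β => (LForm.cond α β.neg).iff (.neg (.cond α β)) :: decompHyps α β
  | .and β γ => (LForm.cond α (β.and γ)).iff (.and (.cond α β) (.cond α γ)) ::
      (decompHyps α β ++ decompHyps α γ)
  | .or β γ => (LForm.cond α (β.or γ)).iff (.or (.cond α β) (.cond α γ)) ::
      (decompHyps α β ++ decompHyps α γ)

theorem AXdethalt.of_mem_decompHyps {α : Lint} {β : PropForm} {ψ : LForm}
    (h : ψ ∈ decompHyps α β) : AXdethalt ψ := by
  induction β with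
  | atom => simp [decompHyps] at h
  | neg β ih =>
    rcases List.mem_cons.mp h with rfl | h
    exacts [AXdethalt.cond_neg_iff α β, ih h]
  | and β γ ihβ ihγ =>
    rcases List.mem_cons.mp h with rfl | h
    · exact Deriv.cond_and_iff α β γ
    · exact (List.mem_append.mp h).elim ihβ ihγ
  | or β γ ihβ ihγ =>
    rcases List.mem_cons.mp h with rfl | h
    · exact AXdethalt.cond_or_iff α β γ
    · exact (List.mem_append.mp h).elim ihβ ihγ

theorem cond_eq_eval_of_decompHyps {α : Lint} {β : PropForm} {v : ℕ → Bool}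
    {w : Lint → PropForm → Bool} (h : ∀ ψ ∈ decompHyps α β, ψ.evalA v w = true) :
    w α β = β.eval fun i => w α (.atom i) := by
  induction β with
  | atom => rfl
  | neg β ih =>
    simp only [decompHyps, List.forall_mem_cons, LForm.evalA_iff_eq, LForm.evalA] at h
    rw [h.1, ih h.2, PropForm.eval]
  | and β γ ihβ ihγ | or β γ ihβ ihγ =>
    simp only [decompHyps, List.forall_mem_cons, List.forall_mem_append, LForm.evalA_iff_eq,
      LForm.evalA] at h
    rw [h.1, ihβ h.2.1, ihγ h.2.2, PropForm.eval]

/-- The derivable hypotheses from which a valid `φ` follows tautologically. -/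
def LForm.hyps (φ : LForm) : List LForm :=
  φ.conds.flatMap fun q => .cond q.1 q.1.toProp :: (decompHyps q.1 q.1.toProp ++ decompHyps q.1 q.2)

theorem AXdethalt.of_mem_hyps {φ ψ : LForm} (h : ψ ∈ φ.hyps) : AXdethalt ψ := by
  simp only [LForm.hyps, List.mem_flatMap, List.mem_cons, List.mem_append] at h
  obtain ⟨q, -, rfl | h | h⟩ := h
  exacts [.axR q.1, .of_mem_decompHyps h, .of_mem_decompHyps h]

theorem LForm.eval_of_hyps {φ : LForm} {v : ℕ → Bool} {w : Lint → PropForm → Bool}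
    (hw : ∀ ψ ∈ φ.hyps, ψ.evalA v w = true) {q : Lint × PropForm} (hq : q ∈ φ.conds) :
    q.1.toProp.eval (fun i => w q.1 (.atom i)) = true ∧
      w q.1 q.2 = q.2.eval fun i => w q.1 (.atom i) := by
  have hmem : ∀ ψ ∈ LForm.cond q.1 q.1.toProp ::
      (decompHyps q.1 q.1.toProp ++ decompHyps q.1 q.2), ψ.evalA v w = true :=
    fun ψ hψ => hw ψ (List.mem_flatMap.mpr ⟨q, hq, hψ⟩)
  simp only [List.forall_mem_cons, List.forall_mem_append] at hmem
  obtain ⟨hR, hα, hβ⟩ := hmem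
  exact ⟨cond_eq_eval_of_decompHyps hα ▸ hR, cond_eq_eval_of_decompHyps hβ⟩

section TableMachine

variable {σ : Type*} (code : σ → ℕ) (step : σ → Bool → σ × Bool × Bool) (S : List σ)

def tableMachine : Machine :=
  S.flatMap fun s => [false, true].map fun b =>
    ((code s, b), (code (step s b).1, (step s b).2.1, (step s b).2.2))

variable {code step S}

theorem tableMachine_det (hcode : code.Injective) : (tableMachine code step S).Det := by
  simp only [Machine.Det, tableMachine, List.mem_flatMap, List.mem_map]
  rintro _ ⟨s, -, b, -, rfl⟩ _ ⟨s', -, b', -, rfl⟩ h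
  obtain ⟨hs, rfl⟩ := Prod.mk.inj h
  rw [hcode hs]

theorem MStep.tableMachine {s : σ} (hs : s ∈ S) (itv : ℕ → Option Bool) (p : ℕ)
    (tp : ℕ → Bool) :
    MStep (tableMachine code step S) itv ⟨code s, p, tp⟩
      ⟨code (step s (tp p)).1, movePos p (step s (tp p)).2.2,
        writeTape itv tp p (step s (tp p)).2.1⟩ :=
  ⟨_, List.mem_flatMap.mpr ⟨s, hs, List.mem_map.mpr ⟨tp p, by cases tp p <;> simp, rfl⟩⟩,
    rfl, rfl⟩

theorem halted_tableMachine (hcode : code.Injective) {s : σ} (hs : s ∉ S) (p : ℕ)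
    (tp : ℕ → Bool) : Halted (tableMachine code step S) ⟨code s, p, tp⟩ := by
  simp only [Halted, tableMachine, List.mem_flatMap, List.mem_map]
  rintro _ ⟨s', hs', b, -, rfl⟩ h
  exact hs (hcode (Prod.mk.inj h).1 ▸ hs')

end TableMachine

theorem writeTape_self (itv : ℕ → Option Bool) (tp : ℕ → Bool) (p : ℕ) :
    writeTape itv tp p (tp p) = tp := by
  unfold writeTape
  split_ifs <;> simp

theorem writeTape_toggle (itv : ℕ → Option Bool) (tp : ℕ → Bool) (i : ℕ) :
    (writeTape itv tp i (!tp i) i = tp i ↔ (itv i).isSome) ∧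
      writeTape itv (writeTape itv tp i (!tp i)) i (tp i) = tp := by
  cases h : itv i <;> simp [writeTape, h]

def overwrite (itv : ℕ → Option Bool) (o : List Bool) (j : ℕ) (tp : ℕ → Bool) : ℕ → Bool :=
  fun i => if i < j ∧ itv i = none then o.getD i false else tp i

theorem overwrite_zero (itv : ℕ → Option Bool) (o : List Bool) (tp : ℕ → Bool) :
    overwrite itv o 0 tp = tp := by
  funext i
  simp [overwrite]

theorem overwrite_writeTape (itv : ℕ → Option Bool) (o : List Bool) (j : ℕ)
    (tp : ℕ → Bool) :
    overwrite itv o j (writeTape itv tp j (o.getD j false)) = overwrite itv o (j + 1) tp := by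
  funext i
  rcases lt_trichotomy i j with h | rfl | h
  · by_cases hj : itv j = none <;>
      simp [overwrite, writeTape, hj, h, h.ne, Nat.lt_succ_of_lt h]
  · by_cases hj : itv i = none <;> simp [overwrite, writeTape, hj]
  · by_cases hj : itv j = none <;>
      simp [overwrite, writeTape, hj, h.ne', h.not_gt, Nat.lt_succ_iff.not.mpr h.not_ge]

/-- Control states of the scanner: `scan s` has recorded in `s` which of the cells
`0, …, s.length - 1` are intervened on (and their values); `back` and `check` are the two
halves of the test of cell `s.length`; `write j s` writes the answer to cells `j, …, 0`. -/
inductive ScanState : Type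
  | scan (s : List (Option Bool))
  | back (s : List (Option Bool)) (b : Bool)
  | check (s : List (Option Bool)) (b : Bool)
  | write (j : ℕ) (s : List (Option Bool))
  | done

namespace ScanState

open Encodable in
/-- The initial state `scan []` must be numbered `0`, the start state of every machine. -/
def code : ScanState → ℕ
  | scan s => Nat.pair 0 (encode s)
  | back s b => Nat.pair 1 (encode (s, b))
  | check s b => Nat.pair 2 (encode (s, b))
  | write j s => Nat.pair 3 (encode (j, s))
  | done => Nat.pair 4 0

theorem code_injective : code.Injective := by
  intro st st' h
  cases st <;> cases st' <;> simp_all [code, Nat.pair_eq_pair, Encodable.encode_inj]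

theorem code_scan_nil : code (scan []) = 0 := by
  simp [code, Nat.pair]

def step (N : ℕ) (out : List (Option Bool) → List Bool) :
    ScanState → Bool → ScanState × Bool × Bool
  | scan s, b => if s.length ≤ N then (back s b, !b, true) else (write N s, b, false)
  | back s b, b' => (check s b, b', false)
  | check s b, b' => (scan (s ++ [if b' = b then some b else none]), b, true)
  | write j s, _ =>
      if j = 0 then (done, (out s).getD 0 false, true)
      else (write (j - 1) s, (out s).getD j false, false)
  | done, b => (done, b, true)

/-- A finite list containing every control state that the scanner of `0, …, N` reaches. -/
noncomputable def states (N : ℕ) : List ScanState :=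
  (List.finite_length_le (Option Bool) (N + 1)).toFinset.toList.flatMap fun s =>
    [scan s, back s false, back s true, check s false, check s true] ++
      (List.range (N + 1)).map (write · s)

variable {N : ℕ} {s : List (Option Bool)}

theorem scan_mem_states (hs : s.length ≤ N + 1) : scan s ∈ states N := by
  simp [states, hs]

theorem back_mem_states (hs : s.length ≤ N + 1) (b : Bool) : back s b ∈ states N := by
  cases b <;> simp [states, hs]

theorem check_mem_states (hs : s.length ≤ N + 1) (b : Bool) : check s b ∈ states N := by
  cases b <;> simp [states, hs]

theorem write_mem_states (hs : s.length ≤ N + 1) {j : ℕ} (hj : j ≤ N) :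
    write j s ∈ states N := by
  simp [states, hs, hj]

theorem done_not_mem_states : done ∉ states N := by
  simp [states]

end ScanState

section Scanner

open ScanState

/-- The deterministic machine that records which of the cells `0, …, N` are intervened on,
and their values, as a list `s`, and then writes `out s` to the cells `0, …, N`. -/
noncomputable def scanner (N : ℕ) (out : List (Option Bool) → List Bool) : Machine :=
  tableMachine code (step N out) (states N)

def record (itv : ℕ → Option Bool) (tp : ℕ → Bool) (i : ℕ) : Option Bool :=
  if (itv i).isSome then some (tp i) else none

variable (N : ℕ) (out : List (Option Bool) → List Bool) (itv : ℕ → Option Bool)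

local notation c " ⟶* " c' => Relation.ReflTransGen (MStep (scanner N out) itv) c c'

theorem MStep.scanner {st : ScanState} (hst : st ∈ states N) (p : ℕ) (tp : ℕ → Bool) :
    MStep (scanner N out) itv ⟨code st, p, tp⟩
      ⟨code (step N out st (tp p)).1, movePos p (step N out st (tp p)).2.2,
        writeTape itv tp p (step N out st (tp p)).2.1⟩ :=
  .tableMachine hst itv p tp

theorem scanner_test_cell {s : List (Option Bool)} (hs : s.length ≤ N) (tp : ℕ → Bool) :
    ⟨code (scan s), s.length, tp⟩ ⟶*
      ⟨code (scan (s ++ [record itv tp s.length])), s.length + 1, tp⟩ := by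
  have hs' : s.length ≤ N + 1 := by omega
  obtain ⟨hdetect, hrestore⟩ := writeTape_toggle itv tp s.length
  have h₁ := MStep.scanner N out itv (scan_mem_states hs') s.length tp
  have h₂ := MStep.scanner N out itv (back_mem_states hs' (tp s.length)) (s.length + 1)
    (writeTape itv tp s.length (!tp s.length))
  have h₃ := MStep.scanner N out itv (check_mem_states hs' (tp s.length)) s.length
    (writeTape itv tp s.length (!tp s.length))
  simp only [step, if_pos hs, movePos, if_true, Bool.false_eq_true, if_false,
    Nat.add_sub_cancel, writeTape_self] at h₁ h₂ h₃
  simp only [hdetect, hrestore] at h₃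
  exact .head h₁ (.head h₂ (.single h₃))

theorem scanner_scan (tp : ℕ → Bool) {k : ℕ} (hk : k ≤ N + 1) :
    ⟨code (scan []), 0, tp⟩ ⟶* ⟨code (scan ((List.range k).map (record itv tp))), k, tp⟩ := by
  induction k with
  | zero => exact .refl
  | succ k ih =>
    refine (ih (by omega)).trans ?_
    rw [List.range_succ, List.map_append, List.map_singleton]
    simpa only [List.length_map, List.length_range] using
      scanner_test_cell N out itv (s := (List.range k).map (record itv tp)) (by simp; omega) tp

theorem scanner_write {s : List (Option Bool)} (hs : s.length ≤ N + 1) {j : ℕ} (hj : j ≤ N)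
    (tp : ℕ → Bool) :
    ⟨code (write j s), j, tp⟩ ⟶* ⟨code done, 1, overwrite itv (out s) (j + 1) tp⟩ := by
  induction j generalizing tp with
  | zero =>
    have := MStep.scanner N out itv (write_mem_states hs hj) 0 tp
    simp only [step, if_true, movePos] at this
    rw [← overwrite_writeTape, overwrite_zero]
    exact .single this
  | succ j ih =>
    have := MStep.scanner N out itv (write_mem_states hs hj) (j + 1) tp
    simp only [step, Nat.add_one_ne_zero, if_false, movePos, Bool.false_eq_true,
      Nat.add_sub_cancel] at this
    rw [← overwrite_writeTape]
    exact .head this (ih (by omega) _)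

theorem scanner_run (tp : ℕ → Bool) :
    ⟨0, 0, tp⟩ ⟶*
      ⟨code done, 1,
        overwrite itv (out ((List.range (N + 1)).map (record itv tp))) (N + 1) tp⟩ := by
  have hlen : ((List.range (N + 1)).map (record itv tp)).length = N + 1 := by simp
  have hturn := MStep.scanner N out itv (scan_mem_states hlen.le) (N + 1) tp
  simp only [step, hlen, Nat.not_succ_le_self, if_false, movePos, Bool.false_eq_true,
    Nat.add_sub_cancel, writeTape_self] at hturn
  rw [← code_scan_nil]
  exact (scanner_scan N out itv tp le_rfl).trans
    (.head hturn (scanner_write N out itv hlen.le le_rfl tp))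

theorem scanner_det : (scanner N out).Det :=
  tableMachine_det code_injective

theorem record_initTape (x : ℕ → Bool) :
    record itv (initTape itv x) = itv := by
  funext i
  cases h : itv i <;> simp [record, initTape, h]

theorem outputs_scanner (x : ℕ → Bool) :
    Outputs (scanner N out) itv x =
      {overwrite itv (out ((List.range (N + 1)).map itv)) (N + 1) (initTape itv x)} := by
  have hrun := scanner_run N out itv (initTape itv x)
  rw [record_initTape] at hrun
  exact (outputs_subsingleton_of_det (scanner_det N out) x).eq_singleton_of_mem
    ⟨_, hrun, halted_tableMachine code_injective done_not_mem_states _ _, rfl⟩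

theorem scanner_totalHalting : (scanner N out).TotalHalting := fun α x _ => by
  rw [outputs_scanner]
  exact Set.singleton_nonempty _

end Scanner

open Classical in
noncomputable def lookup (N : ℕ) (y : Lint → ℕ → Bool) (s : List (Option Bool)) : List Bool :=
  if h : ∃ α : Lint, α.maxAtom ≤ N ∧ (List.range (N + 1)).map α.itv = s then
    (List.range (N + 1)).map (y h.choose)
  else []

theorem lookup_map_itv {N : ℕ} (y : Lint → ℕ → Bool) {α : Lint} (hα : α.maxAtom ≤ N) :
    lookup N y ((List.range (N + 1)).map α.itv) = (List.range (N + 1)).map (y α) := by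
  have h : ∃ α' : Lint, α'.maxAtom ≤ N ∧ (List.range (N + 1)).map α'.itv =
      (List.range (N + 1)).map α.itv := ⟨α, hα, rfl⟩
  obtain ⟨hα', heq⟩ := h.choose_spec
  rw [lookup, dif_pos h, Lint.eq_of_itv_eq hα' hα fun i hi =>
    List.map_inj_left.mp heq i (List.mem_range.mpr (Nat.lt_succ_of_le hi))]

theorem exists_det_totalHalting_machine (N : ℕ) (y : Lint → ℕ → Bool) :
    ∃ T : Machine, T.Det ∧ T.TotalHalting ∧
      ∀ α : Lint, α.maxAtom ≤ N → α.toProp.eval (y α) = true →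
        ∀ x, ∀ z ∈ Outputs T α.itv x, ∀ i ≤ N, z i = y α i := by
  refine ⟨scanner N (lookup N y), scanner_det _ _, scanner_totalHalting _ _,
    fun α hα hy x z hz i hi => ?_⟩
  rw [outputs_scanner, Set.mem_singleton_iff, lookup_map_itv y hα] at hz
  subst hz
  cases hb : α.itv i with
  | none => simp [overwrite, hb, Nat.lt_succ_of_le hi]
  | some b =>
    simp only [overwrite, hb, reduceCtorEq, and_false, if_false, initTape, Option.getD_some]
    exact ((Lint.toProp_eval_iff α _).mp hy _ (Lint.itv_eq_some_iff.mp hb)).symm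

theorem AXdethalt_complete {φ : LForm} (H : ∀ M, inMdethalt M → M.Sat φ) : AXdethalt φ := by
  refine Deriv.of_hyps (hyps := φ.hyps)
    (List.forall_iff_forall_mem.mpr fun _ => AXdethalt.of_mem_hyps) fun v w hw => ?_
  obtain ⟨T, hdet, hhalt, hT⟩ :=
    exists_det_totalHalting_machine φ.maxAtom fun α i => w α (.atom i)
  let x := truncate v φ.maxAtom
  have hx : FinSupp x := finSupp_truncate v φ.maxAtom
  classical
  rw [← (satGen_iff_evalA _ _ φ).mp (H ⟨T, x, hx⟩ ⟨hdet, hhalt⟩)]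
  refine LForm.evalA_congr (fun i hi => (truncate_of_le hi).symm) fun q hq => ?_
  obtain ⟨hα, hβ⟩ := LForm.eval_of_hyps hw hq
  obtain ⟨hαN, hβN⟩ := LForm.maxAtom_le_of_mem_conds hq
  have houtputs : ∀ z ∈ Outputs T q.1.itv x, q.2.eval z = w q.1 q.2 := fun z hz => by
    rw [hβ]
    exact PropForm.eval_congr fun i hi => hT q.1 hαN hα x z hz i (hi.trans hβN)
  obtain ⟨z, hz⟩ := hhalt q.1 x hx
  cases hb : w q.1 q.2
  · exact (decide_eq_false fun hall => by simpa [houtputs z hz, hb] using hall z hz).symm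
  · exact (decide_eq_true fun z hz => (houtputs z hz).trans hb).symm

/-- Soundness and completeness of `AX↓_det` for `M↓_det`: an
`L`-formula is a theorem of `AX↓_det` iff it is true in every model whose machine
is deterministic and halts on every input tape under every intervention. -/
theorem AXdethalt_sound_complete :
    ∀ φ : LForm, AXdethalt φ ↔ ∀ M : CSM, inMdethalt M → M.Sat φ :=
  fun _ => ⟨AXdethalt_sound, AXdethalt_complete⟩

end CausalSim
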